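/- arXiv:1402.5190 — 4 statements merged into one kernel-verified Lean document; each statement's English description precedes it below -/
import Mathlib

section
/- Assume the subset LCM assumption: for every F ⊂ I and j ∈ F^c, E(x_j | X_F) = E(x_j X_Fᵀ)Σ_F^{-1}X_F almost surely. Then for any F ⊂ I and j ∈ F^c, trace(M^SIR_{F∪{j}}) − trace(M^SIR_F) = Σ_{h=1}^H p_h γ_{j|F,h}². -/
open MeasureTheory ProbabilityTheory Matrix Filter Finset
open scoped BigOperators ENNReal

noncomputable section

namespace TracePursuit

variable {Ω : Type*}

/-- Second-moment (= covariance, under mean zero) matrix of the coordinates of `X` in `F`. -/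
def covM [MeasurableSpace Ω] (μ : Measure Ω) {p : ℕ} (X : Ω → Fin p → ℝ)
    (F : Finset (Fin p)) : Matrix F F ℝ :=
  Matrix.of fun i j => ∫ ω, X ω i.1 * X ω j.1 ∂μ

/-- Slice probability `p_h = P(Y ∈ J_h)`. -/
def sliceP [MeasurableSpace Ω] (μ : Measure Ω) {H : ℕ} (Y : Ω → ℝ)
    (J : Fin H → Set ℝ) (h : Fin H) : ℝ :=
  (μ (Y ⁻¹' J h)).toReal

/-- Slice mean vector `U_{F,h} = E(X_F | Y ∈ J_h)`. -/
def sliceU [MeasurableSpace Ω] (μ : Measure Ω) {p H : ℕ} (X : Ω → Fin p → ℝ)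
    (Y : Ω → ℝ) (J : Fin H → Set ℝ) (F : Finset (Fin p)) (h : Fin H) : F → ℝ :=
  fun i => (∫ ω in Y ⁻¹' J h, X ω i.1 ∂μ) / sliceP μ Y J h

/-- Slice second-moment matrix `V_{F,h} = E(X_F X_Fᵀ | Y ∈ J_h)`. -/
def sliceV [MeasurableSpace Ω] (μ : Measure Ω) {p H : ℕ} (X : Ω → Fin p → ℝ)
    (Y : Ω → ℝ) (J : Fin H → Set ℝ) (F : Finset (Fin p)) (h : Fin H) : Matrix F F ℝ :=
  Matrix.of fun i j => (∫ ω in Y ⁻¹' J h, X ω i.1 * X ω j.1 ∂μ) / sliceP μ Y J h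

/-- The SIR kernel matrix `M^SIR_F = Σ_F^{-1/2} (Σ_h p_h U_{F,h} U_{F,h}ᵀ) Σ_F^{-1/2}`,
where `S` is the inverse square root `Σ_F^{-1/2}`. -/
def MSIR [MeasurableSpace Ω] (μ : Measure Ω) {p H : ℕ} (X : Ω → Fin p → ℝ)
    (Y : Ω → ℝ) (J : Fin H → Set ℝ) (F : Finset (Fin p)) (S : Matrix F F ℝ) :
    Matrix F F ℝ :=
  S * (∑ h, sliceP μ Y J h • vecMulVec (sliceU μ X Y J F h) (sliceU μ X Y J F h)) * S

/-- The SAVE kernel matrix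
`M^SAVE_F = Σ_h p_h (Σ_F^{-1/2}(Σ_F - V_{F,h} + U_{F,h}U_{F,h}ᵀ)Σ_F^{-1/2})²`. -/
def MSAVE [MeasurableSpace Ω] (μ : Measure Ω) {p H : ℕ} (X : Ω → Fin p → ℝ)
    (Y : Ω → ℝ) (J : Fin H → Set ℝ) (F : Finset (Fin p)) (S : Matrix F F ℝ) :
    Matrix F F ℝ :=
  ∑ h, sliceP μ Y J h •
    (S * (covM μ X F - sliceV μ X Y J F h
        + vecMulVec (sliceU μ X Y J F h) (sliceU μ X Y J F h)) * S) ^ 2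

/-- `κ_F = Σ_h p_h U_{F,h}ᵀ Σ_F⁻¹ U_{F,h}`. -/
def kappaF [MeasurableSpace Ω] (μ : Measure Ω) {p H : ℕ} (X : Ω → Fin p → ℝ)
    (Y : Ω → ℝ) (J : Fin H → Set ℝ) (F : Finset (Fin p)) : ℝ :=
  ∑ h, sliceP μ Y J h *
    (sliceU μ X Y J F h ⬝ᵥ (covM μ X F)⁻¹.mulVec (sliceU μ X Y J F h))

/-- The directional-regression kernel matrix `M^DR_F`. -/
def MDR [MeasurableSpace Ω] (μ : Measure Ω) {p H : ℕ} (X : Ω → Fin p → ℝ)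
    (Y : Ω → ℝ) (J : Fin H → Set ℝ) (F : Finset (Fin p)) (S : Matrix F F ℝ) :
    Matrix F F ℝ :=
  (2 : ℝ) • (∑ h, sliceP μ Y J h • (S * sliceV μ X Y J F h * S) ^ 2)
  + (2 : ℝ) • (∑ h, sliceP μ Y J h •
      (S * vecMulVec (sliceU μ X Y J F h) (sliceU μ X Y J F h) * S)) ^ 2
  + (2 : ℝ) • (kappaF μ X Y J F •
      (∑ h, sliceP μ Y J h •
        (S * vecMulVec (sliceU μ X Y J F h) (sliceU μ X Y J F h) * S)))
  - (2 : ℝ) • (1 : Matrix F F ℝ)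

/-- The σ-algebra generated by `X_F`. -/
def mF [MeasurableSpace Ω] {p : ℕ} (X : Ω → Fin p → ℝ) (F : Finset (Fin p)) :
    MeasurableSpace Ω :=
  MeasurableSpace.comap (fun ω => fun i : F => X ω i.1) inferInstance

/-- `θ_{j|F} = Σ_F⁻¹ E(x_j X_F)`. -/
def thetaJF [MeasurableSpace Ω] (μ : Measure Ω) {p : ℕ} (X : Ω → Fin p → ℝ)
    (F : Finset (Fin p)) (j : Fin p) : F → ℝ :=
  (covM μ X F)⁻¹.mulVec fun i => ∫ ω, X ω j * X ω i.1 ∂μ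

/-- The subset linear conditional mean assumption:
for every `F ⊂ I` and `j ∈ Fᶜ`, `E(x_j | X_F) = E(x_j X_Fᵀ) Σ_F⁻¹ X_F` a.s. -/
def SubsetLCM [MeasurableSpace Ω] (μ : Measure Ω) {p : ℕ} (X : Ω → Fin p → ℝ) : Prop :=
  ∀ (F : Finset (Fin p)) (j : Fin p), j ∉ F →
    (μ[fun ω => X ω j | mF X F]) =ᵐ[μ] fun ω => ∑ i : F, thetaJF μ X F j i * X ω i.1

/-- The subset constant conditional variance assumption:
for every `F ⊂ I` and `j ∈ Fᶜ`, `var(x_j | X_F)` is a.s. constant. -/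
def SubsetCCV [MeasurableSpace Ω] (μ : Measure Ω) {p : ℕ} (X : Ω → Fin p → ℝ) : Prop :=
  ∀ (F : Finset (Fin p)) (j : Fin p), j ∉ F → ∃ c : ℝ,
    (fun ω => (μ[fun ω' => X ω' j ^ 2 | mF X F]) ω - ((μ[fun ω' => X ω' j | mF X F]) ω) ^ 2)
      =ᵐ[μ] fun _ => c

/-- The residual `x_{j|F} = x_j - E(x_j | X_F)`. -/
def xres [MeasurableSpace Ω] (μ : Measure Ω) {p : ℕ} (X : Ω → Fin p → ℝ)
    (F : Finset (Fin p)) (j : Fin p) : Ω → ℝ :=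
  fun ω => X ω j - (μ[fun ω' => X ω' j | mF X F]) ω

/-- Variance of a real function. -/
def varF [MeasurableSpace Ω] (μ : Measure Ω) (f : Ω → ℝ) : ℝ :=
  ∫ ω, f ω ^ 2 ∂μ - (∫ ω, f ω ∂μ) ^ 2

/-- `σ²_{j|F} = var(x_{j|F})`. -/
def sigma2 [MeasurableSpace Ω] (μ : Measure Ω) {p : ℕ} (X : Ω → Fin p → ℝ)
    (F : Finset (Fin p)) (j : Fin p) : ℝ :=
  varF μ (xres μ X F j)

/-- `γ_{j|F} = x_{j|F}/σ_{j|F}`. -/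
def gammaRes [MeasurableSpace Ω] (μ : Measure Ω) {p : ℕ} (X : Ω → Fin p → ℝ)
    (F : Finset (Fin p)) (j : Fin p) : Ω → ℝ :=
  fun ω => xres μ X F j ω / Real.sqrt (sigma2 μ X F j)

/-- `γ_{j|F,h} = E(γ_{j|F} | Y ∈ J_h)`. -/
def gammaH [MeasurableSpace Ω] (μ : Measure Ω) {p H : ℕ} (X : Ω → Fin p → ℝ)
    (Y : Ω → ℝ) (J : Fin H → Set ℝ) (F : Finset (Fin p)) (j : Fin p) (h : Fin H) : ℝ :=
  (∫ ω in Y ⁻¹' J h, gammaRes μ X F j ω ∂μ) / sliceP μ Y J h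

/-- `ζ_{j|F,h} = E(γ_{j|F}² | Y ∈ J_h)`. -/
def zetaH [MeasurableSpace Ω] (μ : Measure Ω) {p H : ℕ} (X : Ω → Fin p → ℝ)
    (Y : Ω → ℝ) (J : Fin H → Set ℝ) (F : Finset (Fin p)) (j : Fin p) (h : Fin H) : ℝ :=
  (∫ ω in Y ⁻¹' J h, gammaRes μ X F j ω ^ 2 ∂μ) / sliceP μ Y J h

/-- `E(X_F γ_{j|F} | Y ∈ J_h)`. -/
def sliceXGamma [MeasurableSpace Ω] (μ : Measure Ω) {p H : ℕ} (X : Ω → Fin p → ℝ)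
    (Y : Ω → ℝ) (J : Fin H → Set ℝ) (F : Finset (Fin p)) (j : Fin p) (h : Fin H) : F → ℝ :=
  fun i => (∫ ω in Y ⁻¹' J h, X ω i.1 * gammaRes μ X F j ω ∂μ) / sliceP μ Y J h

/-- `φ_{j|F,h} = Σ_F^{-1/2} (U_{F,h} γ_{j|F,h} - E(X_F γ_{j|F} | Y ∈ J_h))`. -/
def phiH [MeasurableSpace Ω] (μ : Measure Ω) {p H : ℕ} (X : Ω → Fin p → ℝ)
    (Y : Ω → ℝ) (J : Fin H → Set ℝ) (F : Finset (Fin p)) (S : Matrix F F ℝ)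
    (j : Fin p) (h : Fin H) : F → ℝ :=
  S.mulVec fun i => sliceU μ X Y J F h i * gammaH μ X Y J F j h
    - sliceXGamma μ X Y J F j h i

/-- `ν_{j|F,h} = Σ_F^{-1/2} E(X_F γ_{j|F} | Y ∈ J_h)`. -/
def nuH [MeasurableSpace Ω] (μ : Measure Ω) {p H : ℕ} (X : Ω → Fin p → ℝ)
    (Y : Ω → ℝ) (J : Fin H → Set ℝ) (F : Finset (Fin p)) (S : Matrix F F ℝ)
    (j : Fin p) (h : Fin H) : F → ℝ :=
  S.mulVec (sliceXGamma μ X Y J F j h)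

/-- `ι_{j|F,h} = Σ_F^{-1/2} U_{F,h} γ_{j|F,h}`. -/
def iotaH [MeasurableSpace Ω] (μ : Measure Ω) {p H : ℕ} (X : Ω → Fin p → ℝ)
    (Y : Ω → ℝ) (J : Fin H → Set ℝ) (F : Finset (Fin p)) (S : Matrix F F ℝ)
    (j : Fin p) (h : Fin H) : F → ℝ :=
  gammaH μ X Y J F j h • S.mulVec (sliceU μ X Y J F h)

/-- `ι_{j|F} = Σ_h p_h ι_{j|F,h}`. -/
def iotaSum [MeasurableSpace Ω] (μ : Measure Ω) {p H : ℕ} (X : Ω → Fin p → ℝ)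
    (Y : Ω → ℝ) (J : Fin H → Set ℝ) (F : Finset (Fin p)) (S : Matrix F F ℝ)
    (j : Fin p) : F → ℝ :=
  ∑ h, sliceP μ Y J h • iotaH μ X Y J F S j h

/-- `ϱ_{j|F} = Σ_h p_h γ_{j|F,h}²`. -/
def rhoJF [MeasurableSpace Ω] (μ : Measure Ω) {p H : ℕ} (X : Ω → Fin p → ℝ)
    (Y : Ω → ℝ) (J : Fin H → Set ℝ) (F : Finset (Fin p)) (j : Fin p) : ℝ :=
  ∑ h, sliceP μ Y J h * gammaH μ X Y J F j h ^ 2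

/-- `{J_h}` is a measurable partition of the sample space of `Y`. -/
def IsSlicePartition {H : ℕ} (J : Fin H → Set ℝ) : Prop :=
  (∀ h, MeasurableSet (J h)) ∧ Pairwise (Function.onFun Disjoint J) ∧ (⋃ h, J h) = Set.univ

/-- `S` is a symmetric inverse square root of `Sig`, i.e. `S = Σ'^{-1/2}`. -/
def IsInvSqrt {n : Type*} [Fintype n] [DecidableEq n] (S Sig : Matrix n n ℝ) : Prop :=
  S.IsSymm ∧ S * S = Sig⁻¹

end TracePursuit

open TracePursuit

/-! Since `Σ_F^{-1/2}` squares to `Σ_F⁻¹`, `trace M^SIR_F = Σ_h p_h U_{F,h}ᵀ Σ_F⁻¹ U_{F,h}`.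
Listing `F ∪ {j}` as `F` followed by `j` makes `Σ_{F∪{j}}` a bordered matrix, and the Schur
complement formula for its inverse adds `(U_{j,h} - θᵀU_{F,h})² / (Σ_jj - θᵀE(X_F x_j))` to the
quadratic form, where `θ = Σ_F⁻¹ E(X_F x_j)`. Under the linear conditional mean assumption
`x_{j|F} = x_j - θᵀX_F`, so `σ_{j|F} γ_{j|F,h} = U_{j,h} - θᵀU_{F,h}`, and by the normal equations
`E(X_F x_{j|F}) = 0` its variance is exactly that Schur complement. -/

namespace Matrix

variable {m n R : Type*} [Fintype m] [Fintype n] [CommRing R]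

theorem trace_mul_vecMulVec (A : Matrix m m R) (u v : m → R) :
    (A * vecMulVec u v).trace = v ⬝ᵥ A *ᵥ u := by
  simp only [trace, diag, mul_apply, vecMulVec_apply, dotProduct, mulVec, Finset.mul_sum]
  exact Finset.sum_congr rfl fun _ _ => Finset.sum_congr rfl fun _ _ => by ring

variable [DecidableEq m] [DecidableEq n]

theorem dotProduct_fromBlocks_inv_mulVec {A : Matrix m m R} {B : Matrix m n R}
    {C : Matrix n m R} {D : Matrix n n R} (hA : IsUnit A) (hS : IsUnit (D - C * A⁻¹ * B))
    (x' x : m → R) (y' y : n → R) :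
    (x' ⊕ᵥ y') ⬝ᵥ (fromBlocks A B C D)⁻¹ *ᵥ (x ⊕ᵥ y) =
      x' ⬝ᵥ A⁻¹ *ᵥ x
        + (y' - x' ᵥ* (A⁻¹ * B)) ⬝ᵥ (D - C * A⁻¹ * B)⁻¹ *ᵥ (y - (C * A⁻¹) *ᵥ x) := by
  have := hA.invertible
  have := hS.invertible
  rw [← invOf_eq_nonsing_inv A] at this ⊢
  have := fromBlocks₁₁Invertible A B C D
  rw [← invOf_eq_nonsing_inv, ← invOf_eq_nonsing_inv, invOf_fromBlocks₁₁_eq, fromBlocks_mulVec,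
    sumElim_dotProduct_sumElim]
  simp only [Sum.elim_comp_inl, Sum.elim_comp_inr, add_mulVec, neg_mulVec, ← mulVec_mulVec,
    dotProduct_add, dotProduct_neg, sub_dotProduct, dotProduct_sub, mulVec_sub,
    ← vecMul_vecMul, ← dotProduct_mulVec (x' ᵥ* ⅟A) B, dotProduct_mulVec x' ⅟A]
  ring

theorem dotProduct_submatrix_inv_mulVec {o : Type*} [Fintype o] [DecidableEq o] (A : Matrix m m R)
    (e : o ≃ m) (u v : m → R) :
    (u ∘ e) ⬝ᵥ (A.submatrix e e)⁻¹ *ᵥ (v ∘ e) = u ⬝ᵥ A⁻¹ *ᵥ v := by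
  rw [inv_submatrix_equiv, submatrix_mulVec_equiv, Function.comp_assoc, Equiv.self_comp_symm,
    Function.comp_id, ← comp_equiv_symm_dotProduct, Function.comp_assoc, Equiv.self_comp_symm,
    Function.comp_id]

variable {ι K : Type*} [DecidableEq ι] [Field K]

def principalSubmatrix (G : Matrix ι ι K) (s : Finset ι) : Matrix s s K :=
  G.submatrix (↑) (↑)

theorem dotProduct_principalSubmatrix_insert_inv_mulVec {G : Matrix ι ι K} (hG : G.IsSymm)
    {s : Finset ι} {j : ι} (hj : j ∉ s) (hs : IsUnit (G.principalSubmatrix s))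
    (hjs : IsUnit (G.principalSubmatrix (insert j s))) (u : ι → K) :
    (insert j s).restrict u ⬝ᵥ (G.principalSubmatrix (insert j s))⁻¹ *ᵥ (insert j s).restrict u
      = s.restrict u ⬝ᵥ (G.principalSubmatrix s)⁻¹ *ᵥ s.restrict u
        + (u j - ((G.principalSubmatrix s)⁻¹ *ᵥ s.restrict (G j)) ⬝ᵥ s.restrict u) ^ 2
          / (G j j - ((G.principalSubmatrix s)⁻¹ *ᵥ s.restrict (G j)) ⬝ᵥ s.restrict (G j)) := by
  set e := ((Finset.subtypeInsertEquivOption hj).trans (Equiv.optionEquivSumPUnit.{0} s)).symm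
  set A := G.principalSubmatrix s
  set c := s.restrict (G j)
  set x := s.restrict u
  have hblocks : (G.principalSubmatrix (insert j s)).submatrix e e =
      fromBlocks A (replicateCol PUnit c) (replicateRow PUnit c) (of fun _ _ => G j j) := by
    ext (i | i) (k | k)
    exacts [rfl, hG.apply _ _, rfl, rfl]
  have hu : (insert j s).restrict u ∘ e = x ⊕ᵥ fun _ => u j := by
    ext (i | i) <;> rfl
  have hAinv : A⁻¹ᵀ = A⁻¹ := (hG.submatrix _).inv
  set θ := A⁻¹ *ᵥ c
  have hrow : x ᵥ* (A⁻¹ * replicateCol PUnit c) = fun _ => θ ⬝ᵥ x := by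
    rw [← vecMul_vecMul, mulVec_replicateCol_eq_const, ← dotProduct_mulVec, dotProduct_comm]
    rfl
  have hcol : (replicateRow PUnit c * A⁻¹) *ᵥ x = fun _ => θ ⬝ᵥ x := by
    rw [← mulVec_mulVec, replicateRow_mulVec_eq_const, dotProduct_mulVec, ← hAinv,
      vecMul_transpose]
    rfl
  have hschur : (of fun _ _ => G j j) - replicateRow PUnit c * A⁻¹ * replicateCol PUnit c
      = of fun _ _ => G j j - θ ⬝ᵥ c := by
    rw [Matrix.mul_assoc, ← replicateCol_mulVec, replicateRow_mul_replicateCol, dotProduct_comm]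
    rfl
  have hS := (isUnit_submatrix_equiv e e).mpr hjs
  rw [hblocks] at hS
  have := hs.invertible
  rw [isUnit_fromBlocks_iff_of_invertible₁₁, invOf_eq_nonsing_inv] at hS
  rw [← dotProduct_submatrix_inv_mulVec _ e, hblocks, hu, dotProduct_fromBlocks_inv_mulVec hs hS,
    hrow, hcol, hschur]
  simp only [dotProduct, Fintype.sum_unique, Pi.sub_apply, inv_subsingleton, of_apply,
    Ring.inverse_eq_inv', diagonal_const_mulVec, Pi.smul_apply, smul_eq_mul]
  ring

end Matrix

namespace TracePursuit

variable {Ω : Type*} [MeasurableSpace Ω] {μ : Measure Ω} {p : ℕ} {X : Ω → Fin p → ℝ}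
  {F : Finset (Fin p)} {j : Fin p}

variable (μ X) in
def secondMoment : Matrix (Fin p) (Fin p) ℝ :=
  Matrix.of fun a b => ∫ ω, X ω a * X ω b ∂μ

variable (μ X) in
theorem secondMoment_isSymm : (secondMoment μ X).IsSymm := by
  ext a b
  exact integral_congr_ae (.of_forall fun ω => mul_comm _ _)

theorem covM_posDef (hpos : (covM μ X Finset.univ).PosDef) (F : Finset (Fin p)) :
    (covM μ X F).PosDef :=
  hpos.submatrix (e := fun i : F => ⟨i.1, Finset.mem_univ _⟩) fun _ _ h =>
    Subtype.ext (congrArg Subtype.val h :)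

theorem trace_MSIR {H : ℕ} (Y : Ω → ℝ) (J : Fin H → Set ℝ) {S : Matrix F F ℝ}
    (hS : S * S = (covM μ X F)⁻¹) :
    (MSIR μ X Y J F S).trace = ∑ h, sliceP μ Y J h *
      (sliceU μ X Y J F h ⬝ᵥ (covM μ X F)⁻¹ *ᵥ sliceU μ X Y J F h) := by
  rw [MSIR, trace_mul_cycle, hS, Matrix.mul_sum, trace_sum]
  simp only [Matrix.mul_smul, trace_smul, trace_mul_vecMulVec, smul_eq_mul]

variable (μ X F j) in
def linResidual : Ω → ℝ :=
  fun ω => X ω j - ∑ i : F, thetaJF μ X F j i * X ω i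

theorem xres_ae_eq_linResidual (hLCM : SubsetLCM μ X) (hj : j ∉ F) :
    xres μ X F j =ᵐ[μ] linResidual μ X F j := by
  filter_upwards [hLCM F j hj] with ω hω
  rw [xres, hω, linResidual]

theorem memLp_linResidual (hX : ∀ i, MemLp (fun ω => X ω i) 2 μ) :
    MemLp (linResidual μ X F j) 2 μ :=
  (hX j).sub (memLp_finsetSum _ fun i _ => (hX i).const_mul _)

theorem integral_mul_linResidual (hX : ∀ i, MemLp (fun ω => X ω i) 2 μ) {g : Ω → ℝ}
    (hg : MemLp g 2 μ) :
    ∫ ω, g ω * linResidual μ X F j ω ∂μ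
      = ∫ ω, g ω * X ω j ∂μ - ∑ i : F, thetaJF μ X F j i * ∫ ω, g ω * X ω i ∂μ := by
  have hgX : ∀ a, Integrable (fun ω => g ω * X ω a) μ := fun a => hg.integrable_mul (hX a)
  simp only [linResidual, mul_sub, Finset.mul_sum, mul_left_comm (g _)]
  have hsum : ∀ i ∈ (Finset.univ : Finset F),
      Integrable (fun ω => thetaJF μ X F j i * (g ω * X ω i)) μ :=
    fun i _ => (hgX i).const_mul _
  rw [integral_sub (hgX j) (integrable_finsetSum _ hsum), integral_finsetSum _ hsum]
  simp only [integral_const_mul]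

theorem integral_coord_mul_linResidual_eq_zero (hX : ∀ i, MemLp (fun ω => X ω i) 2 μ)
    (hF : IsUnit (covM μ X F)) (i : F) :
    ∫ ω, X ω i * linResidual μ X F j ω ∂μ = 0 := by
  have hnormal : covM μ X F *ᵥ thetaJF μ X F j = fun i : F => ∫ ω, X ω j * X ω i ∂μ := by
    rw [thetaJF, mulVec_mulVec, mul_nonsing_inv _ ((isUnit_iff_isUnit_det _).mp hF),
      one_mulVec]
  have hsymm : ∫ ω, X ω i * X ω j ∂μ = ∫ ω, X ω j * X ω i ∂μ :=
    (secondMoment_isSymm μ X).apply j i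
  rw [integral_mul_linResidual hX (hX i), hsymm, ← congrFun hnormal i, sub_eq_zero]
  exact Finset.sum_congr rfl fun k _ => mul_comm _ _

theorem integral_linResidual_sq (hX : ∀ i, MemLp (fun ω => X ω i) 2 μ)
    (hF : IsUnit (covM μ X F)) :
    ∫ ω, linResidual μ X F j ω ^ 2 ∂μ
      = ∫ ω, X ω j * X ω j ∂μ - thetaJF μ X F j ⬝ᵥ fun i : F => ∫ ω, X ω j * X ω i ∂μ := by
  have hcomm : ∀ g : Ω → ℝ, ∫ ω, linResidual μ X F j ω * g ω ∂μ
      = ∫ ω, g ω * linResidual μ X F j ω ∂μ :=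
    fun g => integral_congr_ae (.of_forall fun ω => mul_comm _ _)
  calc ∫ ω, linResidual μ X F j ω ^ 2 ∂μ
      = ∫ ω, linResidual μ X F j ω * X ω j ∂μ
          - ∑ i : F, thetaJF μ X F j i * ∫ ω, linResidual μ X F j ω * X ω i ∂μ := by
        simp_rw [sq]
        exact integral_mul_linResidual hX (memLp_linResidual hX)
    _ = ∫ ω, X ω j * linResidual μ X F j ω ∂μ := by
        simp [hcomm, integral_coord_mul_linResidual_eq_zero hX hF]
    _ = _ := integral_mul_linResidual hX (hX j)

theorem setIntegral_linResidual (hX : ∀ i, Integrable (fun ω => X ω i) μ) (s : Set Ω) :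
    ∫ ω in s, linResidual μ X F j ω ∂μ
      = ∫ ω in s, X ω j ∂μ - ∑ i : F, thetaJF μ X F j i * ∫ ω in s, X ω i ∂μ := by
  have hsum : ∀ i ∈ (Finset.univ : Finset F),
      IntegrableOn (fun ω => thetaJF μ X F j i * X ω i) s μ :=
    fun i _ => ((hX i).const_mul _).integrableOn
  unfold linResidual
  rw [integral_sub (hX j).integrableOn (integrable_finsetSum _ hsum),
    integral_finsetSum _ hsum]
  simp only [integral_const_mul]

theorem sigma2_eq_integral_linResidual_sq (hLCM : SubsetLCM μ X) (hj : j ∉ F)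
    (hX : ∀ i, Integrable (fun ω => X ω i) μ) (hmean : ∀ i, ∫ ω, X ω i ∂μ = 0) :
    sigma2 μ X F j = ∫ ω, linResidual μ X F j ω ^ 2 ∂μ := by
  have hres := xres_ae_eq_linResidual hLCM hj
  have hmean_res : ∫ ω, linResidual μ X F j ω ∂μ = 0 := by
    simpa [hmean] using setIntegral_linResidual (F := F) (j := j) hX Set.univ
  rw [sigma2, varF, integral_congr_ae hres, hmean_res,
    integral_congr_ae (hres.mono fun ω hω => congrArg (· ^ 2) hω)]
  ring

theorem gammaH_eq {H : ℕ} (Y : Ω → ℝ) (J : Fin H → Set ℝ) (h : Fin H)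
    (hLCM : SubsetLCM μ X) (hj : j ∉ F) (hX : ∀ i, Integrable (fun ω => X ω i) μ) :
    gammaH μ X Y J F j h
      = ((∫ ω in Y ⁻¹' J h, X ω j ∂μ) / sliceP μ Y J h
          - thetaJF μ X F j ⬝ᵥ sliceU μ X Y J F h) / Real.sqrt (sigma2 μ X F j) := by
  have hγ : gammaRes μ X F j =ᵐ[μ.restrict (Y ⁻¹' J h)]
      fun ω => linResidual μ X F j ω / Real.sqrt (sigma2 μ X F j) :=
    ae_restrict_of_ae ((xres_ae_eq_linResidual hLCM hj).mono fun ω hω => by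
      rw [gammaRes, hω])
  rw [gammaH, integral_congr_ae hγ, integral_div, setIntegral_linResidual hX, div_right_comm,
    sub_div, Finset.sum_div]
  simp only [dotProduct, sliceU, mul_div_assoc]

end TracePursuit

theorem sir_trace_difference_general {Ω : Type*} [m0 : MeasurableSpace Ω]
    (μ : Measure Ω) [IsProbabilityMeasure μ]
    {p H : ℕ} (X : Ω → Fin p → ℝ) (Y : Ω → ℝ)
    (hmom : ∀ i, MemLp (fun ω => X ω i) 4 μ)
    (hmean : ∀ i, ∫ ω, X ω i ∂μ = 0)
    (hpos : (covM μ X Finset.univ).PosDef)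
    (J : Fin H → Set ℝ)
    (invS : ∀ F : Finset (Fin p), Matrix F F ℝ)
    (hinvS : ∀ F, IsInvSqrt (invS F) (covM μ X F))
    (hLCM : SubsetLCM μ X)
    (F : Finset (Fin p)) (j : Fin p) (hj : j ∉ F) :
    (MSIR μ X Y J (insert j F) (invS (insert j F))).trace
      - (MSIR μ X Y J F (invS F)).trace
      = ∑ h, sliceP μ Y J h * gammaH μ X Y J F j h ^ 2 := by
  have hX2 : ∀ i, MemLp (fun ω => X ω i) 2 μ := fun i => (hmom i).mono_exponent (by norm_num)
  have hX1 : ∀ i, Integrable (fun ω => X ω i) μ := fun i => (hX2 i).integrable one_le_two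
  have hF := (covM_posDef hpos F).isUnit
  have hσ := sigma2_eq_integral_linResidual_sq hLCM hj hX1 hmean
  have hσ_nonneg : 0 ≤ sigma2 μ X F j := hσ ▸ integral_nonneg fun ω => sq_nonneg _
  rw [trace_MSIR Y J (hinvS _).2, trace_MSIR Y J (hinvS F).2, ← Finset.sum_sub_distrib]
  refine Finset.sum_congr rfl fun h _ => ?_
  rw [← mul_sub, gammaH_eq Y J h hLCM hj hX1, div_pow, Real.sq_sqrt hσ_nonneg, hσ,
    integral_linResidual_sq hX2 hF]
  congr 1
  rw [sub_eq_iff_eq_add']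
  -- `covM`, `sliceU` and `thetaJF` unfold to principal submatrices and restrictions of
  -- `secondMoment μ X` and of the vector of slice means
  exact dotProduct_principalSubmatrix_insert_inv_mulVec (secondMoment_isSymm μ X) hj hF
    (covM_posDef hpos _).isUnit fun a => (∫ ω in Y ⁻¹' J h, X ω a ∂μ) / sliceP μ Y J h

/-- **Theorem 1, part 1 (SIR trace identity).** Under the subset linear conditional mean
assumption, for any `F ⊂ I` and `j ∈ Fᶜ`,
`trace(M^SIR_{F∪{j}}) - trace(M^SIR_F) = Σ_h p_h γ_{j|F,h}²`. -/
theorem sir_trace_difference {Ω : Type*} [m0 : MeasurableSpace Ω]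
    (μ : Measure Ω) [IsProbabilityMeasure μ]
    {p H : ℕ} (X : Ω → Fin p → ℝ) (Y : Ω → ℝ)
    (hX : Measurable X) (hY : Measurable Y)
    (hmom : ∀ i, MemLp (fun ω => X ω i) 4 μ)
    (hmean : ∀ i, ∫ ω, X ω i ∂μ = 0)
    (hpos : (covM μ X Finset.univ).PosDef)
    (J : Fin H → Set ℝ) (hJ : IsSlicePartition J)
    (hph : ∀ h, 0 < sliceP μ Y J h)
    (invS : ∀ F : Finset (Fin p), Matrix F F ℝ)
    (hinvS : ∀ F, IsInvSqrt (invS F) (covM μ X F))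
    (hLCM : SubsetLCM μ X)
    (F : Finset (Fin p)) (j : Fin p) (hj : j ∉ F)
    (hsig : 0 < sigma2 μ X F j) :
    (MSIR μ X Y J (insert j F) (invS (insert j F))).trace
      - (MSIR μ X Y J F (invS F)).trace
      = ∑ h, sliceP μ Y J h * gammaH μ X Y J F j h ^ 2 :=
  sir_trace_difference_general (m0 := m0) μ X Y hmom hmean hpos J invS hinvS hLCM F j hj
end
end

section
/- For h = 1,…,H let W_h = p_h^{-1/2}(1(Y∈J_h) − p_h) and a_h = Σ^{-1}E(X W_h). Then trace(M^SIR) = (H − 1) − Σ_{h=1}^H E{(W_h − Xᵀ a_h)²}. -/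
open MeasureTheory ProbabilityTheory Matrix Filter Finset
open scoped BigOperators ENNReal

noncomputable section

open TracePursuit

/-!
Since `S * S = Σ⁻¹`, the trace of `M^SIR = S (Σ_h p_h U_h U_hᵀ) S` is `Σ_h p_h U_hᵀ Σ⁻¹ U_h`.
On the other side, `Xᵀ a_h` is the least-squares projection of `W_h` onto the span of the
coordinates of `X`, so `E(W_h − Xᵀ a_h)² = E W_h² − b_hᵀ Σ⁻¹ b_h` with `b_h = E(X W_h)`.
As `X` is centred, `b_h = √p_h U_h`, while `E W_h² = 1 − p_h`; summing over the slices and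
using `Σ_h p_h = 1` gives the identity.
-/

namespace TracePursuit

section LeastSquares

variable {Ω ι : Type*} [MeasurableSpace Ω] {μ : Measure Ω} [Fintype ι]

theorem sub_sum_mul_sq (v : ℝ) (z a : ι → ℝ) :
    (v - ∑ i, z i * a i) ^ 2
      = v ^ 2 - 2 * ∑ i, a i * (z i * v) + ∑ i, a i * ∑ j, z i * z j * a j := by
  have hcross : ∑ i, a i * (z i * v) = v * ∑ i, z i * a i := by
    rw [Finset.mul_sum]; exact Finset.sum_congr rfl fun i _ => by ring
  have hquad : ∑ i, a i * ∑ j, z i * z j * a j = (∑ i, z i * a i) ^ 2 := by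
    rw [sq, Finset.sum_mul_sum]
    refine Finset.sum_congr rfl fun i _ => ?_
    rw [Finset.mul_sum]
    exact Finset.sum_congr rfl fun j _ => by ring
  rw [hcross, hquad]; ring

theorem integral_sub_sum_mul_sq {Z : Ω → ι → ℝ} {V : Ω → ℝ}
    (hZ : ∀ i, MemLp (fun ω => Z ω i) 2 μ) (hV : MemLp V 2 μ) (a : ι → ℝ) :
    ∫ ω, (V ω - ∑ i, Z ω i * a i) ^ 2 ∂μ
      = ∫ ω, V ω ^ 2 ∂μ - 2 * (a ⬝ᵥ fun i => ∫ ω, Z ω i * V ω ∂μ)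
        + a ⬝ᵥ (Matrix.of fun i j => ∫ ω, Z ω i * Z ω j ∂μ) *ᵥ a := by
  have hZV : ∀ i, Integrable (fun ω => a i * (Z ω i * V ω)) μ :=
    fun i => ((hZ i).integrable_mul hV).const_mul _
  have hZZ : ∀ i j, Integrable (fun ω => Z ω i * Z ω j * a j) μ :=
    fun i j => ((hZ i).integrable_mul (hZ j)).mul_const _
  have hZZsum : ∀ i, Integrable (fun ω => a i * ∑ j, Z ω i * Z ω j * a j) μ :=
    fun i => (integrable_finsetSum _ fun j _ => hZZ i j).const_mul _
  simp_rw [sub_sum_mul_sq]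
  rw [integral_add, integral_sub hV.integrable_sq, integral_const_mul,
    integral_finsetSum _ fun i _ => hZV i, integral_finsetSum _ fun i _ => hZZsum i]
  · simp only [dotProduct, mulVec, Matrix.of_apply, integral_const_mul,
      integral_finsetSum _ fun j _ => hZZ _ j, integral_mul_const]
  · exact (integrable_finsetSum _ fun i _ => hZV i).const_mul _
  · exact hV.integrable_sq.sub ((integrable_finsetSum _ fun i _ => hZV i).const_mul _)
  · exact integrable_finsetSum _ fun i _ => hZZsum i

theorem integral_sub_sum_mul_sq_of_mulVec_eq {Z : Ω → ι → ℝ} {V : Ω → ℝ}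
    (hZ : ∀ i, MemLp (fun ω => Z ω i) 2 μ) (hV : MemLp V 2 μ) {a : ι → ℝ}
    (ha : (Matrix.of fun i j => ∫ ω, Z ω i * Z ω j ∂μ) *ᵥ a = fun i => ∫ ω, Z ω i * V ω ∂μ) :
    ∫ ω, (V ω - ∑ i, Z ω i * a i) ^ 2 ∂μ
      = ∫ ω, V ω ^ 2 ∂μ - a ⬝ᵥ fun i => ∫ ω, Z ω i * V ω ∂μ := by
  rw [integral_sub_sum_mul_sq hZ hV, ha]; ring

end LeastSquares

section ScaledIndicator

variable {Ω : Type*} [MeasurableSpace Ω] {μ : Measure Ω} {s : Set Ω}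

def scaledCenteredIndicator (μ : Measure Ω) (s : Set Ω) (ω : Ω) : ℝ :=
  (s.indicator (fun _ => (1 : ℝ)) ω - μ.real s) / Real.sqrt (μ.real s)

theorem memLp_scaledCenteredIndicator [IsFiniteMeasure μ] (hs : MeasurableSet s) (q : ℝ≥0∞) :
    MemLp (scaledCenteredIndicator μ s) q μ := by
  unfold scaledCenteredIndicator
  simp_rw [div_eq_mul_inv]
  exact (((memLp_const (1 : ℝ)).indicator hs).sub (memLp_const (μ.real s))).mul_const _

theorem integral_scaledCenteredIndicator_sq [IsProbabilityMeasure μ] (hs : MeasurableSet s)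
    (hpos : 0 < μ.real s) :
    ∫ ω, scaledCenteredIndicator μ s ω ^ 2 ∂μ = 1 - μ.real s := by
  have hpoint : ∀ ω, scaledCenteredIndicator μ s ω ^ 2
      = ((1 - 2 * μ.real s) * s.indicator (fun _ => (1 : ℝ)) ω + μ.real s ^ 2) / μ.real s := by
    intro ω
    rw [scaledCenteredIndicator, div_pow, Real.sq_sqrt hpos.le]
    by_cases hω : ω ∈ s <;> simp only [hω, Set.indicator_of_mem, Set.indicator_of_notMem,
      not_false_eq_true] <;> ring
  simp_rw [hpoint]
  rw [integral_div, integral_add, integral_const_mul, integral_indicator_const _ hs, integral_const,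
    probReal_univ, one_smul, smul_eq_mul, mul_one]
  · field_simp; ring
  · exact ((integrable_const 1).indicator hs).const_mul _
  · exact integrable_const _

theorem integral_mul_scaledCenteredIndicator [IsFiniteMeasure μ] (hs : MeasurableSet s)
    {f : Ω → ℝ} (hf : Integrable f μ) (hf0 : ∫ ω, f ω ∂μ = 0) :
    ∫ ω, f ω * scaledCenteredIndicator μ s ω ∂μ = (∫ ω in s, f ω ∂μ) / Real.sqrt (μ.real s) := by
  have hpoint : ∀ ω, f ω * scaledCenteredIndicator μ s ω
      = (s.indicator f ω - μ.real s * f ω) / Real.sqrt (μ.real s) := by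
    intro ω
    rw [scaledCenteredIndicator]
    by_cases hω : ω ∈ s <;> simp only [hω, Set.indicator_of_mem, Set.indicator_of_notMem,
      not_false_eq_true] <;> ring
  simp_rw [hpoint]
  rw [integral_div, integral_sub (hf.indicator hs) (hf.const_mul _), integral_indicator hs,
    integral_const_mul, hf0, mul_zero, sub_zero]

end ScaledIndicator

section Slices

variable {Ω : Type*} [MeasurableSpace Ω] {μ : Measure Ω} {p H : ℕ}

theorem sum_sliceP_eq_one [IsProbabilityMeasure μ] {Y : Ω → ℝ} (hY : Measurable Y)
    {J : Fin H → Set ℝ} (hJ : IsSlicePartition J) : ∑ h, sliceP μ Y J h = 1 := by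
  obtain ⟨hJm, hJd, hJu⟩ := hJ
  calc ∑ h, sliceP μ Y J h = μ.real (⋃ h, Y ⁻¹' J h) :=
        (measureReal_iUnion_fintype (fun _ _ hij => (hJd hij).preimage Y) fun h => hY (hJm h)).symm
    _ = 1 := by rw [← Set.preimage_iUnion, hJu, Set.preimage_univ, probReal_univ]

theorem trace_MSIR_eq_kappaF {X : Ω → Fin p → ℝ} {Y : Ω → ℝ} {J : Fin H → Set ℝ}
    {F : Finset (Fin p)} {S : Matrix F F ℝ} (hS : IsInvSqrt S (covM μ X F)) :
    (MSIR μ X Y J F S).trace = kappaF μ X Y J F := by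
  rw [MSIR, trace_mul_cycle, hS.2, Matrix.mul_sum, trace_sum, kappaF]
  refine Finset.sum_congr rfl fun h _ => ?_
  rw [Matrix.mul_smul, trace_smul, mul_vecMulVec, trace_vecMulVec, dotProduct_comm, smul_eq_mul]

theorem integral_sub_sum_mul_sq_slice [IsProbabilityMeasure μ] {X : Ω → Fin p → ℝ} {Y : Ω → ℝ}
    {J : Fin H → Set ℝ} {F : Finset (Fin p)} {h : Fin H}
    (hX : ∀ i, MemLp (fun ω => X ω i) 2 μ) (hmean : ∀ i, ∫ ω, X ω i ∂μ = 0)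
    (hcov : IsUnit (covM μ X F).det) (hs : MeasurableSet (Y ⁻¹' J h)) (hph : 0 < sliceP μ Y J h) :
    ∫ ω, (scaledCenteredIndicator μ (Y ⁻¹' J h) ω - ∑ i : F, X ω i.1 *
        ((covM μ X F)⁻¹ *ᵥ fun i => ∫ ω, X ω i.1 * scaledCenteredIndicator μ (Y ⁻¹' J h) ω ∂μ) i)
          ^ 2 ∂μ
      = (1 - sliceP μ Y J h)
        - sliceP μ Y J h * (sliceU μ X Y J F h ⬝ᵥ (covM μ X F)⁻¹ *ᵥ sliceU μ X Y J F h) := by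
  have hcross : (fun i : F => ∫ ω, X ω i.1 * scaledCenteredIndicator μ (Y ⁻¹' J h) ω ∂μ)
      = Real.sqrt (sliceP μ Y J h) • sliceU μ X Y J F h := by
    funext i
    rw [integral_mul_scaledCenteredIndicator hs ((hX i.1).integrable one_le_two) (hmean i.1),
      Pi.smul_apply, smul_eq_mul, sliceU, mul_div_left_comm, Real.sqrt_div_self', mul_one_div]
    rfl
  rw [integral_sub_sum_mul_sq_of_mulVec_eq (Z := fun ω (i : F) => X ω i.1) (fun i => hX i.1)
      (memLp_scaledCenteredIndicator hs 2)
      ((mulVec_mulVec _ _ _).trans ((congrArg (· *ᵥ _) (mul_nonsing_inv _ hcov)).trans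
        (one_mulVec _))),
    integral_scaledCenteredIndicator_sq hs hph, hcross, mulVec_smul, smul_dotProduct,
    dotProduct_smul, dotProduct_comm, smul_eq_mul, smul_eq_mul, ← mul_assoc,
    Real.mul_self_sqrt hph.le]
  rfl

end Slices

end TracePursuit

theorem sir_trace_regression_identity_general {Ω : Type*} [m0 : MeasurableSpace Ω]
    (μ : Measure Ω) [IsProbabilityMeasure μ]
    {p H : ℕ} (X : Ω → Fin p → ℝ) (Y : Ω → ℝ)
    (hY : Measurable Y)
    (hmom : ∀ i, MemLp (fun ω => X ω i) 4 μ)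
    (hmean : ∀ i, ∫ ω, X ω i ∂μ = 0)
    (hpos : (covM μ X Finset.univ).PosDef)
    (J : Fin H → Set ℝ) (hJ : IsSlicePartition J)
    (hph : ∀ h, 0 < sliceP μ Y J h)
    (invS : ∀ F : Finset (Fin p), Matrix F F ℝ)
    (hinvS : ∀ F, IsInvSqrt (invS F) (covM μ X F))
    -- `W_h = p_h^{-1/2} (1(Y ∈ J_h) - p_h)`:
    (W : Fin H → Ω → ℝ)
    (hW : ∀ h ω, W h ω
      = ((Y ⁻¹' J h).indicator (fun _ => (1 : ℝ)) ω - sliceP μ Y J h)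
          / Real.sqrt (sliceP μ Y J h))
    -- `a_h = Σ⁻¹ E(X W_h)`:
    (a : Fin H → (↥(Finset.univ : Finset (Fin p)) → ℝ))
    (ha : ∀ h, a h
      = (covM μ X Finset.univ)⁻¹.mulVec fun i => ∫ ω, X ω i.1 * W h ω ∂μ) :
    (MSIR μ X Y J Finset.univ (invS Finset.univ)).trace
      = (H - 1 : ℝ)
        - ∑ h, ∫ ω, (W h ω - ∑ i : ↥(Finset.univ : Finset (Fin p)), X ω i.1 * a h i) ^ 2 ∂μ := by
  obtain rfl : W = fun h => scaledCenteredIndicator μ (Y ⁻¹' J h) :=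
    funext fun h => funext (hW h)
  obtain rfl := funext ha
  rw [trace_MSIR_eq_kappaF (hinvS _), kappaF,
    Finset.sum_congr rfl fun h _ => integral_sub_sum_mul_sq_slice
      (fun i => (hmom i).mono_exponent (by norm_num)) hmean
      (isUnit_iff_ne_zero.mpr hpos.det_pos.ne') (hY (hJ.1 h)) (hph h),
    Finset.sum_sub_distrib, Finset.sum_sub_distrib, sum_sliceP_eq_one hY hJ]
  simp

/-- **Lemma 4.** For `h = 1,…,H` let `W_h = p_h^{-1/2}(1(Y∈J_h) − p_h)` and
`a_h = Σ⁻¹ E(X W_h)`.  Then `trace(M^SIR) = (H − 1) − Σ_h E((W_h − Xᵀ a_h)²)`. -/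
theorem sir_trace_regression_identity {Ω : Type*} [m0 : MeasurableSpace Ω]
    (μ : Measure Ω) [IsProbabilityMeasure μ]
    {p H : ℕ} (X : Ω → Fin p → ℝ) (Y : Ω → ℝ)
    (hX : Measurable X) (hY : Measurable Y)
    (hmom : ∀ i, MemLp (fun ω => X ω i) 4 μ)
    (hmean : ∀ i, ∫ ω, X ω i ∂μ = 0)
    (hpos : (covM μ X Finset.univ).PosDef)
    (J : Fin H → Set ℝ) (hJ : IsSlicePartition J)
    (hph : ∀ h, 0 < sliceP μ Y J h)
    (invS : ∀ F : Finset (Fin p), Matrix F F ℝ)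
    (hinvS : ∀ F, IsInvSqrt (invS F) (covM μ X F))
    -- `W_h = p_h^{-1/2} (1(Y ∈ J_h) - p_h)`:
    (W : Fin H → Ω → ℝ)
    (hW : ∀ h ω, W h ω
      = ((Y ⁻¹' J h).indicator (fun _ => (1 : ℝ)) ω - sliceP μ Y J h)
          / Real.sqrt (sliceP μ Y J h))
    -- `a_h = Σ⁻¹ E(X W_h)`:
    (a : Fin H → (↥(Finset.univ : Finset (Fin p)) → ℝ))
    (ha : ∀ h, a h
      = (covM μ X Finset.univ)⁻¹.mulVec fun i => ∫ ω, X ω i.1 * W h ω ∂μ) :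
    (MSIR μ X Y J Finset.univ (invS Finset.univ)).trace
      = (H - 1 : ℝ)
        - ∑ h, ∫ ω, (W h ω - ∑ i : ↥(Finset.univ : Finset (Fin p)), X ω i.1 * a h i) ^ 2 ∂μ :=
  sir_trace_regression_identity_general (m0 := m0) μ X Y hY hmom hmean hpos J hJ hph invS hinvS W hW
    a ha
end
end

section
/- Assume the subset LCM assumption (E(x_j | X_F) = E(x_j X_Fᵀ)Σ_F^{-1}X_F a.s.) and the subset CCV assumption (var(x_j | X_F) is a.s. constant). If Y ⟂ x_j | X_F for some F ⊂ I and j ∈ F^c, then for every h = 1,…,H, E(x_{j|F}² | Y∈J_h) = var(x_{j|F}); equivalently ζ_{j|F,h} = 1. -/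
open MeasureTheory ProbabilityTheory Matrix Filter Finset
open scoped BigOperators ENNReal

noncomputable section

/-!
Write `r = x_j - E(x_j | X_F)`. The conditional variance identity
`E(r² | X_F) = E(x_j² | X_F) - E(x_j | X_F)²` and the CCV assumption make `E(r² | X_F)` an a.s.
constant `c`, which is then `var(r) = σ²_{j|F}`. Since `Y ⟂ x_j | X_F`, conditioning
`1{Y ∈ J_h}` on `(X_F, x_j)` is the same as conditioning it on `X_F` alone; as `r²` is a function
of `(X_F, x_j)`, this gives `E(r² 1{Y ∈ J_h}) = E(E(r² | X_F) 1{Y ∈ J_h}) = c p_h`.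
-/

theorem Set.indicator_eq_mul_indicator_one {ι M₀ : Type*} [MulZeroOneClass M₀] (s : Set ι)
    (f : ι → M₀) : s.indicator f = f * s.indicator fun _ => 1 := by
  ext i; by_cases hi : i ∈ s <;> simp [hi]

section PiSystem

variable {Ω : Type*}

theorem isPiSystem_image2_inter {C D : Set (Set Ω)} (hC : IsPiSystem C) (hD : IsPiSystem D) :
    IsPiSystem (Set.image2 (· ∩ ·) C D) := by
  rintro _ ⟨a₁, ha₁, b₁, hb₁, rfl⟩ _ ⟨a₂, ha₂, b₂, hb₂, rfl⟩ hne
  rw [Set.inter_inter_inter_comm] at hne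
  exact ⟨a₁ ∩ a₂, hC _ ha₁ _ ha₂ (hne.mono Set.inter_subset_left),
    b₁ ∩ b₂, hD _ hb₁ _ hb₂ (hne.mono Set.inter_subset_right), Set.inter_inter_inter_comm ..⟩

theorem MeasurableSpace.generateFrom_image2_inter (m₁ m₂ : MeasurableSpace Ω) :
    MeasurableSpace.generateFrom
      (Set.image2 (· ∩ ·) {s | MeasurableSet[m₁] s} {s | MeasurableSet[m₂] s}) = m₁ ⊔ m₂ := by
  refine le_antisymm (MeasurableSpace.generateFrom_le ?_) (sup_le ?_ ?_)
  · rintro _ ⟨a, ha, b, hb, rfl⟩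
    exact (le_sup_left (b := m₂) a ha).inter (le_sup_right (a := m₁) b hb)
  · exact fun a ha => MeasurableSpace.measurableSet_generateFrom
      ⟨a, ha, Set.univ, @MeasurableSet.univ _ m₂, Set.inter_univ a⟩
  · exact fun b hb => MeasurableSpace.measurableSet_generateFrom
      ⟨Set.univ, @MeasurableSet.univ _ m₁, b, hb, Set.univ_inter b⟩

end PiSystem

section SetIntegral

variable {Ω E : Type*} [NormedAddCommGroup E] [NormedSpace ℝ E] {m m₀ : MeasurableSpace Ω}
  {μ : Measure[m₀] Ω} {f g : Ω → E}

theorem setIntegral_eq_of_isPiSystem (hm : m ≤ m₀) {C : Set (Set Ω)}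
    (hgen : m = MeasurableSpace.generateFrom C) (hC : IsPiSystem C)
    (hf : Integrable f μ) (hg : Integrable g μ) (huniv : ∫ x, f x ∂μ = ∫ x, g x ∂μ)
    (hbasic : ∀ s ∈ C, ∫ x in s, f x ∂μ = ∫ x in s, g x ∂μ) {s : Set Ω}
    (hs : MeasurableSet[m] s) : ∫ x in s, f x ∂μ = ∫ x in s, g x ∂μ := by
  induction s, hs using MeasurableSpace.induction_on_inter hgen hC with
  | empty => simp
  | basic s hs => exact hbasic s hs
  | compl s hs ih =>
    rw [setIntegral_compl (hm s hs) hf, setIntegral_compl (hm s hs) hg, huniv, ih]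
  | iUnion t hdisj ht ih =>
    rw [integral_iUnion (fun i => hm _ (ht i)) hdisj hf.integrableOn,
      integral_iUnion (fun i => hm _ (ht i)) hdisj hg.integrableOn]
    exact tsum_congr ih

end SetIntegral

namespace ProbabilityTheory

variable {Ω : Type*} {m' m₁ m₂ mΩ : MeasurableSpace Ω} [StandardBorelSpace Ω]
  {μ : Measure Ω} [IsFiniteMeasure μ] {hm' : m' ≤ mΩ}

/-- Markov property of conditional independence. -/
theorem CondIndep.condExp_indicator_sup_ae_eq (hm₁ : m₁ ≤ mΩ) (hm₂ : m₂ ≤ mΩ)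
    (hind : CondIndep m' m₁ m₂ hm' μ) {A : Set Ω} (hA : MeasurableSet[m₁] A) :
    μ⟦A | m' ⊔ m₂⟧ =ᵐ[μ] μ⟦A | m'⟧ := by
  have hA₀ : MeasurableSet A := hm₁ A hA
  have h1A : Integrable (A.indicator fun _ => (1 : ℝ)) μ :=
    (integrable_const 1).indicator hA₀
  have hfac := (condIndep_iff m' m₁ m₂ hm' hm₁ hm₂ μ).mp hind
  refine (ae_eq_condExp_of_forall_setIntegral_eq (sup_le hm' hm₂) h1A
    (fun _ _ _ => integrable_condExp.integrableOn) (fun u hu _ => ?_)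
    (StronglyMeasurable.mono stronglyMeasurable_condExp
      (le_sup_left : m' ≤ m' ⊔ m₂)).aestronglyMeasurable).symm
  refine setIntegral_eq_of_isPiSystem (sup_le hm' hm₂)
    (MeasurableSpace.generateFrom_image2_inter m' m₂).symm
    (isPiSystem_image2_inter (@MeasurableSpace.isPiSystem_measurableSet _ m')
      (@MeasurableSpace.isPiSystem_measurableSet _ m₂))
    integrable_condExp h1A (integral_condExp hm') ?_ hu
  rintro _ ⟨a, ha, b, hb, rfl⟩
  have hb₀ : MeasurableSet b := hm₂ b hb
  have h1b : Integrable (b.indicator fun _ => (1 : ℝ)) μ :=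
    (integrable_const 1).indicator hb₀
  have hb_int : Integrable (b.indicator (μ⟦A | m'⟧)) μ := integrable_condExp.indicator hb₀
  have hpull : μ[b.indicator (μ⟦A | m'⟧) | m'] =ᵐ[μ] μ⟦A | m'⟧ * μ⟦b | m'⟧ := by
    rw [Set.indicator_eq_mul_indicator_one] at hb_int ⊢
    exact condExp_mul_of_stronglyMeasurable_left stronglyMeasurable_condExp hb_int h1b
  calc ∫ ω in a ∩ b, (μ⟦A | m'⟧) ω ∂μ
      = ∫ ω in a, (μ[b.indicator (μ⟦A | m'⟧) | m']) ω ∂μ := by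
        rw [setIntegral_condExp hm' hb_int ha, setIntegral_indicator hb₀]
    _ = ∫ ω in a, (μ⟦A ∩ b | m'⟧) ω ∂μ :=
        setIntegral_congr_ae (hm' a ha) (by
          filter_upwards [hpull, hfac A b hA hb] with ω h₁ h₂ _ using h₁.trans h₂.symm)
    _ = ∫ ω in a ∩ b, A.indicator (fun _ => (1 : ℝ)) ω ∂μ := by
        rw [setIntegral_condExp hm' ((integrable_const 1).indicator (hA₀.inter hb₀)) ha,
          Set.inter_comm A b, ← Set.indicator_indicator, setIntegral_indicator hb₀]

theorem CondIndep.setIntegral_eq_mul_measureReal (hm₁ : m₁ ≤ mΩ) (hm₂ : m₂ ≤ mΩ)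
    (hind : CondIndep m' m₁ m₂ hm' μ) {A : Set Ω} (hA : MeasurableSet[m₁] A) {φ : Ω → ℝ}
    (hφm : StronglyMeasurable[m' ⊔ m₂] φ) (hφi : Integrable φ μ) {c : ℝ}
    (hc : μ[φ | m'] =ᵐ[μ] fun _ => c) :
    ∫ ω in A, φ ω ∂μ = c * μ.real A := by
  have hA₀ : MeasurableSet A := hm₁ A hA
  have h1A : Integrable (A.indicator fun _ => (1 : ℝ)) μ :=
    (integrable_const 1).indicator hA₀
  have hφA : Integrable (φ * A.indicator fun _ => (1 : ℝ)) μ := by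
    rw [← Set.indicator_eq_mul_indicator_one]
    exact hφi.indicator hA₀
  have hmarkov : μ[φ * A.indicator (fun _ => (1 : ℝ)) | m' ⊔ m₂] =ᵐ[μ] φ * μ⟦A | m'⟧ := by
    filter_upwards [condExp_mul_of_stronglyMeasurable_left hφm hφA h1A,
      hind.condExp_indicator_sup_ae_eq hm₁ hm₂ hA] with ω h₁ h₂
    simp [h₁, h₂]
  have hφg : Integrable (μ⟦A | m'⟧ * φ) μ := by
    rw [mul_comm]; exact integrable_condExp.congr hmarkov
  calc ∫ ω in A, φ ω ∂μ
      = ∫ ω, (φ * A.indicator fun _ => (1 : ℝ)) ω ∂μ := by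
        rw [← integral_indicator hA₀, Set.indicator_eq_mul_indicator_one]
    _ = ∫ ω, (μ⟦A | m'⟧ * φ) ω ∂μ := by
        rw [← integral_condExp (sup_le hm' hm₂), integral_congr_ae hmarkov, mul_comm]
    _ = ∫ ω, c * (μ⟦A | m'⟧) ω ∂μ := by
        rw [← integral_condExp hm']
        refine integral_congr_ae ?_
        filter_upwards [condExp_mul_of_stronglyMeasurable_left stronglyMeasurable_condExp hφg hφi,
          hc] with ω h₁ h₂
        rw [h₁, Pi.mul_apply, h₂, mul_comm]
    _ = c * μ.real A := by
        rw [integral_const_mul, integral_condExp hm', ← Pi.one_def, integral_indicator_one hA₀]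

end ProbabilityTheory

namespace TracePursuit

theorem varF_sub_condExp_eq_integral_condVar {Ω : Type*} {m m₀ : MeasurableSpace Ω}
    {μ : Measure[m₀] Ω} [IsFiniteMeasure μ] (hm : m ≤ m₀) {f : Ω → ℝ} (hf : Integrable f μ) :
    varF μ (fun ω => f ω - (μ[f | m]) ω) = ∫ ω, (Var[f; μ | m]) ω ∂μ := by
  rw [varF, integral_sub hf integrable_condExp, integral_condExp hm, sub_self, condVar,
    integral_condExp hm]
  simp

end TracePursuit

open TracePursuit

theorem zeta_eq_one_under_null_general {Ω : Type*} [m0 : MeasurableSpace Ω]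
    [StandardBorelSpace Ω]
    (μ : Measure Ω) [IsProbabilityMeasure μ]
    {p H : ℕ} (X : Ω → Fin p → ℝ) (Y : Ω → ℝ)
    (hX : Measurable X) (hY : Measurable Y)
    (hmom : ∀ i, MemLp (fun ω => X ω i) 4 μ)
    (J : Fin H → Set ℝ) (hJ : IsSlicePartition J)
    (hph : ∀ h, 0 < sliceP μ Y J h)
    (hCCV : SubsetCCV μ X)
    (F : Finset (Fin p)) (j : Fin p) (hj : j ∉ F)
    (hsig : 0 < sigma2 μ X F j)
    (hleF : mF X F ≤ m0)
    (hnull : CondIndepFun (mF X F) hleF Y (fun ω => X ω j) μ) :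
    ∀ h : Fin H,
      (∫ ω in Y ⁻¹' J h, xres μ X F j ω ^ 2 ∂μ) / sliceP μ Y J h = sigma2 μ X F j ∧
      zetaH μ X Y J F j h = 1 := by
  intro h
  have hxj : Measurable fun ω => X ω j := (measurable_pi_apply j).comp hX
  have hxj2 : MemLp (fun ω => X ω j) 2 μ := (hmom j).mono_exponent (by norm_num)
  obtain ⟨c, hc⟩ := hCCV F j hj
  have hvar : Var[fun ω => X ω j; μ | mF X F] =ᵐ[μ] fun _ => c :=
    (condVar_ae_eq_condExp_sq_sub_sq_condExp hleF hxj2).trans hc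
  have hσ : sigma2 μ X F j = c := by
    have := varF_sub_condExp_eq_integral_condVar hleF (hxj2.integrable one_le_two)
    rwa [integral_congr_ae hvar, integral_const, probReal_univ, one_smul] at this
  have hres_meas :
      StronglyMeasurable[mF X F ⊔ MeasurableSpace.comap (fun ω => X ω j) inferInstance]
        fun ω => xres μ X F j ω ^ 2 :=
    (((comap_measurable _).mono le_sup_right le_rfl).stronglyMeasurable.sub
      (stronglyMeasurable_condExp.mono le_sup_left)).pow 2
  have hres_int : Integrable (fun ω => xres μ X F j ω ^ 2) μ :=
    (hxj2.sub (hxj2.condExp one_le_two)).integrable_sq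
  have hslice : ∫ ω in Y ⁻¹' J h, xres μ X F j ω ^ 2 ∂μ = c * sliceP μ Y J h :=
    ((condIndepFun_iff_condIndep _ _ _ _ _).mp hnull).setIntegral_eq_mul_measureReal
      hY.comap_le hxj.comap_le ⟨J h, hJ.1 h, rfl⟩ hres_meas hres_int hvar
  have hp : sliceP μ Y J h ≠ 0 := (hph h).ne'
  refine ⟨by rw [hslice, hσ]; field_simp, ?_⟩
  simp only [zetaH, gammaRes, div_pow, Real.sq_sqrt hsig.le, integral_div, hslice]
  rw [hσ] at hsig ⊢
  field_simp

/-- Under the subset LCM and subset CCV assumptions, if `Y ⟂ x_j | X_F` for some `F ⊂ I` and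
`j ∈ Fᶜ`, then for every `h`, `E(x_{j|F}² | Y∈J_h) = var(x_{j|F})`; equivalently
`ζ_{j|F,h} = 1`. -/
theorem zeta_eq_one_under_null {Ω : Type*} [m0 : MeasurableSpace Ω]
    [StandardBorelSpace Ω] [Nonempty Ω]
    (μ : Measure Ω) [IsProbabilityMeasure μ]
    {p H : ℕ} (X : Ω → Fin p → ℝ) (Y : Ω → ℝ)
    (hX : Measurable X) (hY : Measurable Y)
    (hmom : ∀ i, MemLp (fun ω => X ω i) 4 μ)
    (hmean : ∀ i, ∫ ω, X ω i ∂μ = 0)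
    (hpos : (covM μ X Finset.univ).PosDef)
    (J : Fin H → Set ℝ) (hJ : IsSlicePartition J)
    (hph : ∀ h, 0 < sliceP μ Y J h)
    (hLCM : SubsetLCM μ X) (hCCV : SubsetCCV μ X)
    (F : Finset (Fin p)) (j : Fin p) (hj : j ∉ F)
    (hsig : 0 < sigma2 μ X F j)
    (hleF : mF X F ≤ m0)
    (hnull : CondIndepFun (mF X F) hleF Y (fun ω => X ω j) μ) :
    ∀ h : Fin H,
      (∫ ω in Y ⁻¹' J h, xres μ X F j ω ^ 2 ∂μ) / sliceP μ Y J h = sigma2 μ X F j ∧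
      zetaH μ X Y J F j h = 1 :=
  zeta_eq_one_under_null_general (m0 := m0) μ X Y hX hY hmom J hJ hph hCCV F j hj hsig hleF hnull
end
end

section
/- Assume the subset LCM assumption (E(x_j | X_F) = E(x_j X_Fᵀ)Σ_F^{-1}X_F a.s.). If Y ⟂ x_j | X_F for some F ⊂ I and j ∈ F^c, then for every h = 1,…,H, E(x_{j|F} | Y∈J_h) = 0 and E(X_F x_{j|F} | Y∈J_h) = 0; consequently φ_{j|F,h} = 0. -/
/-!
Conditionally on `X_F`, the regular conditional distribution makes `Y` and `x_j` independent,
so `E(1{Y ∈ J_h} x_j | X_F) = P(Y ∈ J_h | X_F) E(x_j | X_F)`. Pulling out an `X_F`-measurable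
factor `W` on both sides gives `E(W x_j; Y ∈ J_h) = E(W E(x_j | X_F); Y ∈ J_h)`: on every slice
the residual `x_{j|F}` is orthogonal to all square-integrable functions of `X_F`, in particular
to `1` and to the coordinates of `X_F`, and both terms of `φ_{j|F,h}` are such slice integrals.
-/

open MeasureTheory ProbabilityTheory Matrix Filter Finset
open scoped BigOperators ENNReal

noncomputable section

open TracePursuit

namespace ProbabilityTheory

variable {Ω : Type*} {m' mΩ : MeasurableSpace Ω} [StandardBorelSpace Ω]
  {μ : Measure Ω} [IsFiniteMeasure μ] {hm' : m' ≤ mΩ}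

theorem CondIndepFun.condExp_mul_ae_eq {U V : Ω → ℝ} (hUV : CondIndepFun m' hm' U V μ)
    (hU : Measurable U) (hV : Measurable V) (hUi : Integrable U μ) (hVi : Integrable V μ)
    (hUVi : Integrable (U * V) μ) :
    μ[U * V | m'] =ᵐ[μ] μ[U | m'] * μ[V | m'] := by
  have hker : ∀ᵐ ω ∂μ, ∫ x, (U * V) x ∂condExpKernel μ m' ω =
      (∫ x, U x ∂condExpKernel μ m' ω) * ∫ x, V x ∂condExpKernel μ m' ω := by
    filter_upwards [ae_of_ae_trim hm'
      ((condIndepFun_iff_map_prod_eq_prod_map_map hU hV).1 hUV)] with ω hω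
    have hind : IndepFun U V (condExpKernel μ m' ω) := by
      rw [indepFun_iff_map_prod_eq_prod_map_map hU.aemeasurable hV.aemeasurable]
      simpa [Kernel.map_apply, Kernel.prod_apply, hU, hV, hU.prodMk hV] using hω
    exact hind.integral_mul_eq_mul_integral hU.aestronglyMeasurable hV.aestronglyMeasurable
  filter_upwards [condExp_ae_eq_integral_condExpKernel hm' hUVi,
    condExp_ae_eq_integral_condExpKernel hm' hUi,
    condExp_ae_eq_integral_condExpKernel hm' hVi, hker] with ω h h1 h2 h3
  rw [h, Pi.mul_apply, h1, h2, h3]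

theorem CondIndepFun.setIntegral_preimage_mul_eq_mul_condExp {β : Type*} [MeasurableSpace β]
    {Y : Ω → β} {g W : Ω → ℝ} (hYg : CondIndepFun m' hm' Y g μ) (hY : Measurable Y)
    (hg : Measurable g) (hgi : Integrable g μ) (hW : StronglyMeasurable[m'] W)
    (hWg : Integrable (W * g) μ) (hWe : Integrable (W * μ[g | m']) μ)
    {s : Set β} (hs : MeasurableSet s) :
    ∫ ω in Y ⁻¹' s, W ω * g ω ∂μ = ∫ ω in Y ⁻¹' s, W ω * μ[g | m'] ω ∂μ := by
  set χ : Ω → ℝ := s.indicator 1 ∘ Y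
  have hχ : Measurable χ := (measurable_one.indicator hs).comp hY
  have hχ_le : ∀ᵐ ω ∂μ, ‖χ ω‖ ≤ 1 := Eventually.of_forall fun ω => by
    by_cases hω : Y ω ∈ s <;> simp [χ, hω]
  have hχ_int : Integrable χ μ := by
    simpa using (integrable_const (1 : ℝ)).bdd_mul hχ.aestronglyMeasurable hχ_le
  have hset (f : Ω → ℝ) : ∫ ω in Y ⁻¹' s, f ω ∂μ = ∫ ω, (χ * f) ω ∂μ := by
    rw [← integral_indicator (hY hs)]
    congr 1 with ω
    by_cases hω : Y ω ∈ s <;> simp [χ, hω]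
  have hpull (F : Ω → ℝ) (hF : StronglyMeasurable[m'] F) (hFi : Integrable F μ) :
      ∫ ω, (χ * F) ω ∂μ = ∫ ω, (μ[χ | m'] * F) ω ∂μ := by
    rw [← integral_condExp hm']
    exact integral_congr_ae (condExp_mul_of_stronglyMeasurable_right hF
      (hFi.bdd_mul hχ.aestronglyMeasurable hχ_le) hχ_int)
  have hχg_int : Integrable (χ * g) μ := hgi.bdd_mul hχ.aestronglyMeasurable hχ_le
  have hWχg_int : Integrable (W * (χ * g)) μ :=
    (hWg.bdd_mul hχ.aestronglyMeasurable hχ_le).congr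
      (ae_of_all _ fun ω => by simp only [Pi.mul_apply]; ring)
  have hχg_indep : CondIndepFun m' hm' χ g μ :=
    hYg.comp (measurable_one.indicator hs) measurable_id
  calc ∫ ω in Y ⁻¹' s, W ω * g ω ∂μ
      = ∫ ω, μ[W * (χ * g) | m'] ω ∂μ := by
        rw [hset, integral_condExp hm']; congr 1 with ω; simp only [Pi.mul_apply]; ring
    _ = ∫ ω, (W * (μ[χ | m'] * μ[g | m'])) ω ∂μ := by
        refine integral_congr_ae ?_
        filter_upwards [condExp_mul_of_stronglyMeasurable_left hW hWχg_int hχg_int,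
          hχg_indep.condExp_mul_ae_eq hχ hg hχ_int hgi hχg_int] with ω h1 h2
        simp only [Pi.mul_apply] at h1 h2 ⊢
        rw [h1, h2]
    _ = ∫ ω, (χ * (W * μ[g | m'])) ω ∂μ := by
        rw [hpull _ (hW.mul stronglyMeasurable_condExp) hWe]
        congr 1 with ω; simp only [Pi.mul_apply]; ring
    _ = ∫ ω in Y ⁻¹' s, W ω * μ[g | m'] ω ∂μ := (hset _).symm

theorem CondIndepFun.setIntegral_preimage_mul_sub_condExp_eq_zero {β : Type*} [MeasurableSpace β]
    {Y : Ω → β} {g W : Ω → ℝ} (hYg : CondIndepFun m' hm' Y g μ) (hY : Measurable Y)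
    (hg : Measurable g) (hg2 : MemLp g 2 μ) (hW : StronglyMeasurable[m'] W) (hW2 : MemLp W 2 μ)
    {s : Set β} (hs : MeasurableSet s) :
    ∫ ω in Y ⁻¹' s, W ω * (g ω - μ[g | m'] ω) ∂μ = 0 := by
  have hWg : Integrable (fun ω => W ω * g ω) μ := hW2.integrable_mul hg2
  have hWe : Integrable (fun ω => W ω * μ[g | m'] ω) μ :=
    hW2.integrable_mul (hg2.condExp one_le_two)
  simp_rw [mul_sub]
  rw [integral_sub hWg.integrableOn hWe.integrableOn,
    hYg.setIntegral_preimage_mul_eq_mul_condExp hY hg (hg2.integrable one_le_two) hW hWg hWe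
      hs, sub_self]

end ProbabilityTheory

namespace TracePursuit

variable {Ω : Type*} [MeasurableSpace Ω] {μ : Measure Ω} {p H : ℕ} {X : Ω → Fin p → ℝ}
  {Y : Ω → ℝ} {J : Fin H → Set ℝ} {F : Finset (Fin p)} {j : Fin p} {h : Fin H}

theorem phiH_eq_zero_of_setIntegral_xres_eq_zero (S : Matrix F F ℝ)
    (h_res : ∫ ω in Y ⁻¹' J h, xres μ X F j ω ∂μ = 0)
    (h_mul_res : ∀ i : F, ∫ ω in Y ⁻¹' J h, X ω i.1 * xres μ X F j ω ∂μ = 0) :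
    phiH μ X Y J F S j h = 0 := by
  have h_gamma : gammaH μ X Y J F j h = 0 := by
    simp only [gammaH, gammaRes]
    rw [integral_div, h_res, zero_div, zero_div]
  have h_xgamma (i : F) : sliceXGamma μ X Y J F j h i = 0 := by
    simp only [sliceXGamma, gammaRes, ← mul_div_assoc]
    rw [integral_div, h_mul_res i, zero_div, zero_div]
  simp only [phiH, h_gamma, h_xgamma, mul_zero, sub_zero]
  exact S.mulVec_zero

theorem stronglyMeasurable_mF_apply (i : F) : StronglyMeasurable[mF X F] fun ω => X ω i.1 :=
  have hXF : Measurable[mF X F] fun ω (k : F) => X ω k.1 := Measurable.of_comap_le le_rfl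
  ((measurable_pi_apply i).comp hXF).stronglyMeasurable

end TracePursuit

theorem phi_eq_zero_under_null_general {Ω : Type*} [m0 : MeasurableSpace Ω]
    [StandardBorelSpace Ω]
    (μ : Measure Ω) [IsProbabilityMeasure μ]
    {p H : ℕ} (X : Ω → Fin p → ℝ) (Y : Ω → ℝ)
    (hX : Measurable X) (hY : Measurable Y)
    (hmom : ∀ i, MemLp (fun ω => X ω i) 4 μ)
    (J : Fin H → Set ℝ) (hJ : IsSlicePartition J)
    (invS : ∀ F : Finset (Fin p), Matrix F F ℝ)
    (F : Finset (Fin p)) (j : Fin p)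
    (hleF : mF X F ≤ m0)
    (hnull : CondIndepFun (mF X F) hleF Y (fun ω => X ω j) μ) :
    ∀ h : Fin H,
      (∫ ω in Y ⁻¹' J h, xres μ X F j ω ∂μ) / sliceP μ Y J h = 0 ∧
      (∀ i : F, (∫ ω in Y ⁻¹' J h, X ω i.1 * xres μ X F j ω ∂μ) / sliceP μ Y J h = 0) ∧
      phiH μ X Y J F (invS F) j h = 0 := by
  intro h
  have hX2 (i : Fin p) : MemLp (fun ω => X ω i) 2 μ := (hmom i).mono_exponent (by norm_num)
  have h_orth (W : Ω → ℝ) (hW : StronglyMeasurable[mF X F] W) (hW2 : MemLp W 2 μ) :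
      ∫ ω in Y ⁻¹' J h, W ω * xres μ X F j ω ∂μ = 0 :=
    hnull.setIntegral_preimage_mul_sub_condExp_eq_zero hY (measurable_pi_iff.1 hX j) (hX2 j)
      hW hW2 (hJ.1 h)
  have h_res : ∫ ω in Y ⁻¹' J h, xres μ X F j ω ∂μ = 0 := by
    simpa using h_orth 1 stronglyMeasurable_one (memLp_const 1)
  have h_mul_res (i : F) : ∫ ω in Y ⁻¹' J h, X ω i.1 * xres μ X F j ω ∂μ = 0 :=
    h_orth _ (stronglyMeasurable_mF_apply i) (hX2 i)
  exact ⟨by rw [h_res, zero_div], fun i => by rw [h_mul_res i, zero_div],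
    phiH_eq_zero_of_setIntegral_xres_eq_zero _ h_res h_mul_res⟩

/-- Under the subset LCM assumption, if `Y ⟂ x_j | X_F` for some `F ⊂ I` and `j ∈ Fᶜ`, then
for every `h`, `E(x_{j|F} | Y∈J_h) = 0` and `E(X_F x_{j|F} | Y∈J_h) = 0`; consequently
`φ_{j|F,h} = 0`. -/
theorem phi_eq_zero_under_null {Ω : Type*} [m0 : MeasurableSpace Ω]
    [StandardBorelSpace Ω] [Nonempty Ω]
    (μ : Measure Ω) [IsProbabilityMeasure μ]
    {p H : ℕ} (X : Ω → Fin p → ℝ) (Y : Ω → ℝ)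
    (hX : Measurable X) (hY : Measurable Y)
    (hmom : ∀ i, MemLp (fun ω => X ω i) 4 μ)
    (hmean : ∀ i, ∫ ω, X ω i ∂μ = 0)
    (hpos : (covM μ X Finset.univ).PosDef)
    (J : Fin H → Set ℝ) (hJ : IsSlicePartition J)
    (hph : ∀ h, 0 < sliceP μ Y J h)
    (invS : ∀ F : Finset (Fin p), Matrix F F ℝ)
    (hinvS : ∀ F, IsInvSqrt (invS F) (covM μ X F))
    (hLCM : SubsetLCM μ X)
    (F : Finset (Fin p)) (j : Fin p) (hj : j ∉ F)
    (hsig : 0 < sigma2 μ X F j)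
    (hleF : mF X F ≤ m0)
    (hnull : CondIndepFun (mF X F) hleF Y (fun ω => X ω j) μ) :
    ∀ h : Fin H,
      (∫ ω in Y ⁻¹' J h, xres μ X F j ω ∂μ) / sliceP μ Y J h = 0 ∧
      (∀ i : F, (∫ ω in Y ⁻¹' J h, X ω i.1 * xres μ X F j ω ∂μ) / sliceP μ Y J h = 0) ∧
      phiH μ X Y J F (invS F) j h = 0 :=
  phi_eq_zero_under_null_general (m0 := m0) μ X Y hX hY hmom J hJ invS F j hleF hnull
end
end
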